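/- Let K ∈ 𝒦ₙ. Then for every point x in the relative interior of K ∩ 𝔓ₙ(K) (relative to the affine subspace 𝔓ₙ(K)) there is a proper affine invariant point q with q(K) = x. -/

import Mathlib

/-!
Write `x = p K` for an affine invariant point `p`, and let `g` be the centroid. The maps
`L ↦ g L + (1 + t) • (p L - g L)` are affine invariant points, so for small `t > 0` their values
at `K` lie in `𝔓ₙ(K)` close to `x`, hence in `K`; thus `x` lies strictly between the interior
point `g K` and a point of `K`, so `x ∈ int K`.

Let `s L` be the gauge of `L - g L` at `p L - g L`. It is affine invariant, and continuous
because Hausdorff-close convex bodies containing a common ball around their centroids are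
nested up to a factor close to `1`. As `x ∈ int K`, `s K < 1`; for `s K < a < 1` the point
`q L = g L + (a / max a (s L)) • (p L - g L)` has gauge at most `a`, hence lies in `int L`,
and `q K = p K`.
-/

open scoped Pointwise
open MeasureTheory

noncomputable section

/-- Euclidean space `ℝⁿ`. -/
abbrev EucSp (n : ℕ) := EuclideanSpace ℝ (Fin n)

/-- The space `𝒦ₙ` of convex bodies in `ℝⁿ`: compact convex sets with nonempty interior,
equipped (as a subtype of `ConvexBody`) with the Hausdorff metric. -/
def Kn (n : ℕ) : Type :=
  {K : ConvexBody (EucSp n) // (interior (K : Set (EucSp n))).Nonempty}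

noncomputable instance (n : ℕ) : MetricSpace (Kn n) :=
  Subtype.metricSpace

/-- The underlying set of a convex body in `𝒦ₙ`. -/
def Kn.toSet {n : ℕ} (K : Kn n) : Set (EucSp n) := (K.1 : Set (EucSp n))

/-- An affine equivalence of `ℝⁿ` as a homeomorphism. -/
def affEquivHomeo {n : ℕ} (T : EucSp n ≃ᵃ[ℝ] EucSp n) : EucSp n ≃ₜ EucSp n where
  toEquiv := T.toEquiv
  continuous_toFun := T.toAffineMap.continuous_of_finiteDimensional
  continuous_invFun := T.symm.toAffineMap.continuous_of_finiteDimensional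

/-- The image of a convex body under an invertible affine map, as a convex body. -/
def affImage {n : ℕ} (T : EucSp n ≃ᵃ[ℝ] EucSp n) (K : Kn n) : Kn n :=
  ⟨⟨(T : EucSp n → EucSp n) '' K.toSet,
    (K.1.convex.affine_image T.toAffineMap : Convex ℝ ((T : EucSp n → EucSp n) '' K.toSet)),
    K.1.isCompact.image (affEquivHomeo T).continuous,
    K.1.nonempty.image _⟩,
    by
      obtain ⟨x, hx⟩ := K.2
      exact ⟨T x, ((affEquivHomeo T).image_interior (K.1 : Set (EucSp n))) ▸
        Set.mem_image_of_mem _ hx⟩⟩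

/-- An affine invariant point: a continuous map `p : 𝒦ₙ → ℝⁿ` such that
`p (T K) = T (p K)` for every invertible affine map `T`. -/
def IsAffineInvariantPoint {n : ℕ} (p : Kn n → EucSp n) : Prop :=
  Continuous p ∧ ∀ (T : EucSp n ≃ᵃ[ℝ] EucSp n) (K : Kn n), p (affImage T K) = T (p K)

/-- An affine invariant set mapping: a continuous map `A : 𝒦ₙ → 𝒦ₙ` such that
`A (T K) = T (A K)` for every invertible affine map `T`. -/
def IsAffineInvariantSetMap {n : ℕ} (A : Kn n → Kn n) : Prop :=
  Continuous A ∧ ∀ (T : EucSp n ≃ᵃ[ℝ] EucSp n) (K : Kn n), A (affImage T K) = affImage T (A K)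

/-- The centroid `g(S) = (∫_S x dx) / vol(S)` of a set `S ⊆ ℝⁿ`. -/
def centroid {n : ℕ} (S : Set (EucSp n)) : EucSp n :=
  (volume S).toReal⁻¹ • ∫ x in S, x

/-- `𝔓ₙ(K) = {p(K) : p ∈ 𝔓ₙ}`. -/
def PnSet (n : ℕ) (K : Kn n) : Set (EucSp n) :=
  {x | ∃ p : Kn n → EucSp n, IsAffineInvariantPoint p ∧ p K = x}

end

open Set Filter Topology Metric MeasureTheory
open scoped Pointwise

theorem vadd_subset_thickening_vadd {E : Type*} [SeminormedAddCommGroup E] {s t : Set E}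
    {a b : E} {δ ε : ℝ} (h : s ⊆ thickening δ t) (hab : dist a b ≤ ε) :
    a +ᵥ s ⊆ thickening (δ + ε) (b +ᵥ t) := by
  rintro _ ⟨u, hu, rfl⟩
  obtain ⟨v, hv, huv⟩ := mem_thickening_iff.1 (h hu)
  refine mem_thickening_iff.2 ⟨b +ᵥ v, vadd_mem_vadd_set hv, ?_⟩
  calc dist (a +ᵥ u) (b +ᵥ v) ≤ dist a b + dist u v := dist_add_add_le a u b v
    _ < δ + ε := by linarith

section Gauge

variable {E : Type*} [NormedAddCommGroup E] [NormedSpace ℝ E]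

theorem gauge_image_linearEquiv {F : Type*} [NormedAddCommGroup F] [NormedSpace ℝ F]
    (A : E ≃ₗ[ℝ] F) (s : Set E) (x : E) : gauge (A '' s) (A x) = gauge s x := by
  simp only [gauge_def', ← map_smul, A.injective.mem_set_image]

theorem subset_one_add_smul_of_subset_thickening {s t : Set E} (ht : Convex ℝ t) {r η : ℝ}
    (hr : 0 < r) (hη : 0 ≤ η) (hball : closedBall 0 r ⊆ t) (hst : s ⊆ thickening (η * r) t) :
    s ⊆ (1 + η) • t := by
  intro u hu
  obtain ⟨v, hv, huv⟩ := mem_thickening_iff.1 (hst hu)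
  have : u - v ∈ η • t := by
    refine smul_set_mono hball ?_
    rw [smul_closedBall _ _ hr.le, smul_zero, Real.norm_of_nonneg hη, mem_closedBall_zero_iff,
      ← dist_eq_norm]
    exact huv.le
  rw [ht.add_smul zero_le_one hη, one_smul]
  exact ⟨v, hv, u - v, this, add_sub_cancel v u⟩

theorem gauge_le_one_add_mul_gauge_of_subset_thickening {s t : Set E} (ht : Convex ℝ t)
    (hs : Absorbent ℝ s) {r η : ℝ} (hr : 0 < r) (hη : 0 ≤ η) (hball : closedBall 0 r ⊆ t)
    (hst : s ⊆ thickening (η * r) t) (w : E) :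
    gauge t w ≤ (1 + η) * gauge s w := by
  have h := gauge_mono hs (subset_one_add_smul_of_subset_thickening ht hr hη hball hst) w
  rwa [gauge_smul_left_of_nonneg (by linarith : (0 : ℝ) ≤ 1 + η), Pi.smul_apply, smul_eq_mul,
    inv_mul_le_iff₀ (by linarith)] at h

end Gauge

theorem tendsto_of_forall_le_one_add_mul {X : Type*} {l : Filter X} {f g : X → ℝ} {a : ℝ}
    (hg : Tendsto g l (𝓝 a))
    (h : ∀ η > 0, ∀ᶠ x in l, f x ≤ (1 + η) * g x ∧ g x ≤ (1 + η) * f x) :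
    Tendsto f l (𝓝 a) := by
  have hexists : ∀ b c : ℝ, b < c → ∃ η > 0, b * (1 + η) < c := fun b c hbc => by
    have : ∀ᶠ η in 𝓝 (0 : ℝ), b * (1 + η) < c :=
      (Continuous.tendsto (by fun_prop) 0).eventually (eventually_lt_nhds (by simpa using hbc))
    obtain ⟨η, hηc, hη⟩ :=
      ((this.filter_mono nhdsWithin_le_nhds).and (self_mem_nhdsWithin (s := Ioi 0))).exists
    exact ⟨η, hη, hηc⟩
  refine tendsto_order.2 ⟨fun b hb => ?_, fun c hc => ?_⟩
  · obtain ⟨η, hη, hηb⟩ := hexists b a hb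
    filter_upwards [h η hη, hg.eventually (lt_mem_nhds hηb)] with x hx hbx
    nlinarith
  · obtain ⟨η, hη, hηc⟩ := hexists a c hc
    filter_upwards [h η hη, (hg.mul_const (1 + η)).eventually (gt_mem_nhds hηc)] with x hx hcx
    nlinarith

section InnerProductSpace

variable {E : Type*} [NormedAddCommGroup E] [InnerProductSpace ℝ E] [CompleteSpace E]

theorem Convex.mem_of_closedBall_subset_thickening {t : Set E} (ht : Convex ℝ t)
    (htc : IsClosed t) {x : E} {r : ℝ} (hr : 0 ≤ r)
    (h : closedBall x r ⊆ Metric.thickening r t) : x ∈ t := by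
  by_contra hx
  obtain ⟨f, u, hfu, hux⟩ := geometric_hahn_banach_closed_point ht htc hx
  set v := (InnerProductSpace.toDual ℝ E).symm f
  have hf : ∀ z, f z = inner ℝ v z := fun z => by simp [v]
  -- the point of the ball pushed furthest in the direction that separates `x` from `t`
  set w := x + (r / ‖v‖) • v
  have hw : w ∈ closedBall x r := by
    rcases eq_or_ne v 0 with hv | hv
    · simp [w, hv, hr]
    · simp [w, norm_smul, abs_of_nonneg hr, hv]
  obtain ⟨z, hz, hwz⟩ := mem_thickening_iff.1 (h hw)
  have hfw : f w = f x + r * ‖v‖ := by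
    rcases eq_or_ne v 0 with hv | hv
    · simp [w, hv]
    · rw [hf, hf, inner_add_right, real_inner_smul_right, real_inner_self_eq_norm_sq]
      field_simp
  have hfwz : f w - f z ≤ ‖v‖ * r := by
    rw [hf, hf, ← inner_sub_right]
    exact (real_inner_le_norm v _).trans
      (mul_le_mul_of_nonneg_left (dist_eq_norm w z ▸ hwz.le) (norm_nonneg v))
  linarith [hfu z hz]

theorem tendsto_gauge_of_forall_subset_thickening {X : Type*} {l : Filter X} {S : X → Set E}
    {S₀ : Set E} {y : X → E} {y₀ : E} {r : ℝ} (hS : ∀ x, Convex ℝ (S x))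
    (hSc : ∀ x, IsClosed (S x)) (hS₀ : Convex ℝ S₀) (hr : 0 < r) (hball : closedBall 0 r ⊆ S₀)
    (hlim : ∀ d > 0, ∀ᶠ x in l, S x ⊆ thickening d S₀ ∧ S₀ ⊆ thickening d (S x))
    (hy : Tendsto y l (𝓝 y₀)) :
    Tendsto (fun x => gauge (S x) (y x)) l (𝓝 (gauge S₀ y₀)) := by
  have hS₀nhds : S₀ ∈ 𝓝 0 := mem_of_superset (closedBall_mem_nhds 0 hr) hball
  have hballx : ∀ᶠ x in l, closedBall 0 (r / 2) ⊆ S x := by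
    filter_upwards [hlim (r / 2) (by positivity)] with x hx z hz
    refine (hS x).mem_of_closedBall_subset_thickening (hSc x) (r := r / 2) (by positivity) ?_
    refine (closedBall_subset_closedBall' ?_).trans (hball.trans hx.2)
    linarith [mem_closedBall.1 hz]
  refine tendsto_of_forall_le_one_add_mul
    (((continuous_gauge hS₀ hS₀nhds).tendsto y₀).comp hy) fun η hη => ?_
  filter_upwards [hballx, hlim (η * (r / 2)) (by positivity)] with x hbx hx
  have hSx : S x ∈ 𝓝 0 := mem_of_superset (closedBall_mem_nhds 0 (by positivity)) hbx
  refine ⟨gauge_le_one_add_mul_gauge_of_subset_thickening (hS x) (absorbent_nhds_zero hS₀nhds)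
    (by positivity) hη.le hbx hx.2 _, gauge_le_one_add_mul_gauge_of_subset_thickening hS₀
    (absorbent_nhds_zero hSx) hr hη.le hball (hx.1.trans (thickening_mono ?_ _)) _⟩
  nlinarith

end InnerProductSpace

theorem setIntegral_image_affineEquiv {E F : Type*} [NormedAddCommGroup E] [NormedSpace ℝ E]
    [FiniteDimensional ℝ E] [MeasurableSpace E] [BorelSpace E] (μ : Measure E)
    [μ.IsAddHaarMeasure] [NormedAddCommGroup F] [NormedSpace ℝ F] (T : E ≃ᵃ[ℝ] E) {s : Set E}
    (hs : MeasurableSet s) (f : E → F) :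
    ∫ y in T '' s, f y ∂μ = |LinearMap.det (T.linear : E →ₗ[ℝ] E)| • ∫ x in s, f (T x) ∂μ := by
  have hT : ∀ x ∈ s, HasFDerivWithinAt T
      (AffineEquiv.toContinuousAffineEquiv T).toContinuousAffineMap.contLinear s x :=
    fun x _ => (AffineEquiv.toContinuousAffineEquiv T).toContinuousAffineMap.hasFDerivWithinAt
  rw [integral_image_eq_integral_abs_det_fderiv_smul μ hs hT T.injective.injOn f, integral_smul]
  rfl

section AffineEquiv

variable {k V : Type*} [Ring k] [AddCommGroup V] [Module k V]

theorem AffineEquiv.apply_eq_linear_add (T : V ≃ᵃ[k] V) (x : V) : T x = T.linear x + T 0 := by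
  simpa only [vadd_eq_add, add_zero] using T.map_vadd 0 x

theorem AffineEquiv.linear_sub (T : V ≃ᵃ[k] V) (x y : V) : T.linear (x - y) = T x - T y :=
  T.toAffineMap.linearMap_vsub x y

end AffineEquiv

theorem AffineEquiv.setIntegral_apply {E : Type*} [NormedAddCommGroup E] [NormedSpace ℝ E]
    [FiniteDimensional ℝ E] [MeasurableSpace E] {μ : Measure E}
    (T : E ≃ᵃ[ℝ] E) {s : Set E} (hfin : μ s ≠ ⊤) (hint : IntegrableOn id s μ) :
    ∫ x in s, T x ∂μ = T.linear (∫ x in s, x ∂μ) + μ.real s • T 0 := by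
  let A : E ≃L[ℝ] E := T.linear.toContinuousLinearEquiv
  have hA : IntegrableOn (fun x => A x) s μ := A.toContinuousLinearMap.integrable_comp hint
  rw [show (fun x => T x) = fun x => A x + T 0 from funext T.apply_eq_linear_add,
    integral_add hA (integrableOn_const hfin), A.integral_comp_comm, setIntegral_const]
  rfl

section Centroid

variable {n : ℕ}

theorem centroid_eq (s : Set (EucSp n)) : centroid s = (volume.real s)⁻¹ • ∫ x in s, x := rfl

theorem centroid_image_affineEquiv (T : EucSp n ≃ᵃ[ℝ] EucSp n) {s : Set (EucSp n)}
    (hs : MeasurableSet s) (h0 : volume s ≠ 0) (hfin : volume s ≠ ⊤)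
    (hint : IntegrableOn id s) : centroid (T '' s) = T (centroid s) := by
  have hdet : |LinearMap.det (T.linear : EucSp n →ₗ[ℝ] EucSp n)| ≠ 0 :=
    abs_ne_zero.2 T.linear.isUnit_det'.ne_zero
  have hvol : volume.real (T '' s) =
      |LinearMap.det (T.linear : EucSp n →ₗ[ℝ] EucSp n)| * volume.real s := by
    simpa [setIntegral_const] using setIntegral_image_affineEquiv volume T hs fun _ => (1 : ℝ)
  have hv : volume.real s ≠ 0 := ENNReal.toReal_ne_zero.2 ⟨h0, hfin⟩
  rw [centroid_eq, centroid_eq, hvol, setIntegral_image_affineEquiv volume T hs,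
    T.setIntegral_apply hfin hint, smul_smul, mul_inv_rev, mul_assoc, inv_mul_cancel₀ hdet,
    mul_one, smul_add, smul_smul, inv_mul_cancel₀ hv, one_smul, ← map_smul,
    T.apply_eq_linear_add (_ • _)]

theorem Convex.centroid_mem_interior {s : Set (EucSp n)} (hc : Convex ℝ s)
    (hs : IsCompact s) (hne : (interior s).Nonempty) : centroid s ∈ interior s := by
  obtain ⟨z, hz⟩ := hne
  obtain ⟨r, hr, hzr⟩ := nhds_basis_closedBall.mem_iff.1 (isOpen_interior.mem_nhds hz)
  have : IsFiniteMeasure (volume.restrict s) := isFiniteMeasure_restrict.2 hs.measure_lt_top.ne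
  have hB : volume.restrict s (closedBall z r) ≠ 0 := by
    rw [Measure.restrict_apply measurableSet_closedBall,
      inter_eq_left.2 (hzr.trans interior_subset)]
    exact (measure_closedBall_pos volume z hr).ne'
  have hint : Integrable id (volume.restrict s) :=
    continuous_id.continuousOn.integrableOn_compact hs
  have havg : ⨍ x in closedBall z r, x ∂(volume.restrict s) ∈ closedBall z r :=
    (convex_closedBall z r).set_average_mem isClosed_closedBall hB (measure_ne_top _ _)
      (ae_restrict_mem measurableSet_closedBall) hint.integrableOn
  have := hc.average_mem_interior_of_set hB (ae_restrict_mem hs.measurableSet) hint (hzr havg)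
  rwa [setAverage_eq] at this

end Centroid

namespace Kn

variable {n : ℕ}

theorem convex (L : Kn n) : Convex ℝ L.toSet := L.1.convex

theorem isCompact (L : Kn n) : IsCompact L.toSet := L.1.isCompact

theorem measurableSet (L : Kn n) : MeasurableSet L.toSet := L.isCompact.measurableSet

theorem volume_ne_zero (L : Kn n) : volume L.toSet ≠ 0 :=
  (volume.measure_pos_of_nonempty_interior L.2).ne'

theorem volumeReal_pos (L : Kn n) : 0 < volume.real L.toSet :=
  ENNReal.toReal_pos L.volume_ne_zero L.isCompact.measure_lt_top.ne

theorem subset_thickening_of_dist_lt {L M : Kn n} {δ : ℝ} (h : dist L M < δ) :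
    L.toSet ⊆ thickening δ M.toSet := fun _ hy =>
  mem_thickening_iff.2 (exists_dist_lt_of_hausdorffDist_lt hy h ConvexBody.hausdorffEDist_ne_top)

theorem eventually_subset_thickening (L₀ : Kn n) {δ : ℝ} (hδ : 0 < δ) :
    ∀ᶠ L in 𝓝 L₀, L.toSet ⊆ thickening δ L₀.toSet ∧ L₀.toSet ⊆ thickening δ L.toSet := by
  filter_upwards [ball_mem_nhds L₀ hδ] with L hL
  exact ⟨subset_thickening_of_dist_lt hL, subset_thickening_of_dist_lt (by rwa [dist_comm])⟩

theorem eventually_mem_of_mem_interior {L₀ : Kn n} {y : EucSp n}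
    (hy : y ∈ interior L₀.toSet) : ∀ᶠ L in 𝓝 L₀, y ∈ L.toSet := by
  obtain ⟨r, hr, hyr⟩ := nhds_basis_closedBall.mem_iff.1 (mem_interior_iff_mem_nhds.1 hy)
  filter_upwards [eventually_subset_thickening L₀ hr] with L hL
  exact L.convex.mem_of_closedBall_subset_thickening L.isCompact.isClosed hr.le (hyr.trans hL.2)

theorem eventually_notMem {L₀ : Kn n} {y : EucSp n} (hy : y ∉ L₀.toSet) :
    ∀ᶠ L in 𝓝 L₀, y ∉ L.toSet := by
  obtain ⟨r, hr, hyr⟩ :=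
    nhds_basis_ball.mem_iff.1 (L₀.isCompact.isClosed.isOpen_compl.mem_nhds hy)
  filter_upwards [eventually_subset_thickening L₀ hr] with L hL hyL
  obtain ⟨z, hz, hyz⟩ := mem_thickening_iff.1 (hL.1 hyL)
  exact hyr (mem_ball'.2 hyz) hz

theorem tendsto_indicator_of_notMem_frontier {L₀ : Kn n} {y : EucSp n}
    (hy : y ∉ frontier L₀.toSet) {F : Type*} [Zero F] [TopologicalSpace F] (f : EucSp n → F) :
    Tendsto (fun L : Kn n => L.toSet.indicator f y) (𝓝 L₀) (𝓝 (L₀.toSet.indicator f y)) := by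
  by_cases hyi : y ∈ interior L₀.toSet
  · rw [indicator_of_mem (interior_subset hyi)]
    exact tendsto_const_nhds.congr'
      ((eventually_mem_of_mem_interior hyi).mono fun L hL => (indicator_of_mem hL f).symm)
  · have hyL₀ : y ∉ L₀.toSet := fun h => hy ⟨subset_closure h, hyi⟩
    rw [indicator_of_notMem hyL₀]
    exact tendsto_const_nhds.congr'
      ((eventually_notMem hyL₀).mono fun L hL => (indicator_of_notMem hL f).symm)

theorem continuous_setIntegral {F : Type*} [NormedAddCommGroup F] [NormedSpace ℝ F]
    {f : EucSp n → F} (hf : Continuous f) : Continuous fun L : Kn n => ∫ y in L.toSet, f y := by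
  refine continuous_iff_continuousAt.2 fun L₀ => ?_
  have hB : IsCompact (cthickening 1 L₀.toSet) := L₀.isCompact.cthickening
  obtain ⟨C, hC⟩ := hB.exists_bound_of_continuousOn hf.continuousOn
  have hind : ∀ L : Kn n, ∫ y in L.toSet, f y = ∫ y, L.toSet.indicator f y :=
    fun L => (integral_indicator L.measurableSet).symm
  simp only [ContinuousAt, hind]
  refine tendsto_integral_filter_of_dominated_convergence
    ((cthickening 1 L₀.toSet).indicator fun _ => C) ?_ ?_ ?_ ?_
  · exact Eventually.of_forall fun L => hf.aestronglyMeasurable.indicator L.measurableSet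
  · filter_upwards [eventually_subset_thickening L₀ one_pos] with L hL
    refine Eventually.of_forall fun y => ?_
    by_cases hy : y ∈ L.toSet
    · have hyB := thickening_subset_cthickening _ _ (hL.1 hy)
      rw [indicator_of_mem hy, indicator_of_mem hyB]
      exact hC y hyB
    · rw [indicator_of_notMem hy, norm_zero]
      exact indicator_nonneg (fun z hz => (norm_nonneg _).trans (hC z hz)) y
  · exact (integrable_indicator_iff hB.measurableSet).2 (integrableOn_const hB.measure_lt_top.ne)
  · filter_upwards [measure_eq_zero_iff_ae_notMem.1 (Convex.addHaar_frontier volume L₀.convex)]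
      with y hy
    exact tendsto_indicator_of_notMem_frontier hy f

theorem continuous_centroid : Continuous fun L : Kn n => centroid L.toSet := by
  have hvol : Continuous fun L : Kn n => volume.real L.toSet := by
    simpa [setIntegral_const] using
      continuous_setIntegral (n := n) (continuous_const (y := (1 : ℝ)))
  simp only [centroid_eq]
  exact (hvol.inv₀ fun L => L.volumeReal_pos.ne').smul (continuous_setIntegral continuous_id)

theorem centroid_mem_interior (L : Kn n) : centroid L.toSet ∈ interior L.toSet :=
  L.convex.centroid_mem_interior L.isCompact L.2

theorem centroid_affImage (T : EucSp n ≃ᵃ[ℝ] EucSp n) (L : Kn n) :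
    centroid (affImage T L).toSet = T (centroid L.toSet) :=
  centroid_image_affineEquiv T L.measurableSet L.volume_ne_zero L.isCompact.measure_lt_top.ne
    (continuous_id.continuousOn.integrableOn_compact L.isCompact)

theorem affImage_toSet (T : EucSp n ≃ᵃ[ℝ] EucSp n) (L : Kn n) :
    (affImage T L).toSet = T '' L.toSet := rfl

noncomputable def centroidGauge (L : Kn n) (y : EucSp n) : ℝ :=
  gauge (-centroid L.toSet +ᵥ L.toSet) (y - centroid L.toSet)

theorem centroidGauge_nonneg (L : Kn n) (y : EucSp n) : 0 ≤ L.centroidGauge y := gauge_nonneg _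

theorem neg_centroid_vadd_mem_nhds (L : Kn n) : -centroid L.toSet +ᵥ L.toSet ∈ 𝓝 0 := by
  rw [← mem_interior_iff_mem_nhds, interior_vadd, mem_vadd_set_iff_neg_vadd_mem, neg_neg,
    vadd_eq_add, add_zero]
  exact L.centroid_mem_interior

theorem centroidGauge_lt_one_iff (L : Kn n) {y : EucSp n} :
    L.centroidGauge y < 1 ↔ y ∈ interior L.toSet := by
  rw [centroidGauge,
    gauge_lt_one_iff_mem_interior (L.convex.vadd _) L.neg_centroid_vadd_mem_nhds, interior_vadd,
    mem_vadd_set_iff_neg_vadd_mem, neg_neg, vadd_eq_add, add_sub_cancel]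

theorem centroidGauge_lineMap (L : Kn n) (y : EucSp n) {t : ℝ} (ht : 0 ≤ t) :
    L.centroidGauge (AffineMap.lineMap (centroid L.toSet) y t) = t * L.centroidGauge y := by
  rw [centroidGauge, centroidGauge, ← vsub_eq_sub, AffineMap.lineMap_vsub_left,
    gauge_smul_of_nonneg ht, smul_eq_mul, vsub_eq_sub]

theorem centroidGauge_affImage (T : EucSp n ≃ᵃ[ℝ] EucSp n) (L : Kn n) (y : EucSp n) :
    (affImage T L).centroidGauge (T y) = L.centroidGauge y := by
  have hset : -centroid (affImage T L).toSet +ᵥ (affImage T L).toSet =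
      T.linear '' (-centroid L.toSet +ᵥ L.toSet) := by
    rw [centroid_affImage, affImage_toSet, ← image_vadd, ← image_vadd, image_image, image_image]
    refine image_congr fun z _ => ?_
    rw [vadd_eq_add, vadd_eq_add, neg_add_eq_sub, neg_add_eq_sub, T.linear_sub]
  rw [centroidGauge, hset, centroid_affImage, ← T.linear_sub]
  exact gauge_image_linearEquiv _ _ _

theorem eventually_neg_centroid_vadd_subset_thickening (L₀ : Kn n) {d : ℝ} (hd : 0 < d) :
    ∀ᶠ L in 𝓝 L₀,
      -centroid L.toSet +ᵥ L.toSet ⊆ thickening d (-centroid L₀.toSet +ᵥ L₀.toSet) ∧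
      -centroid L₀.toSet +ᵥ L₀.toSet ⊆ thickening d (-centroid L.toSet +ᵥ L.toSet) := by
  have hc : ∀ᶠ L in 𝓝 L₀, dist (centroid L.toSet) (centroid L₀.toSet) < d / 2 :=
    continuous_centroid.continuousAt.eventually (ball_mem_nhds _ (half_pos hd))
  filter_upwards [eventually_subset_thickening L₀ (half_pos hd), hc] with L hL hcL
  rw [← add_halves d]
  exact ⟨vadd_subset_thickening_vadd hL.1 (by rw [dist_neg_neg]; exact hcL.le),
    vadd_subset_thickening_vadd hL.2 (by rw [dist_neg_neg, dist_comm]; exact hcL.le)⟩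

theorem continuous_centroidGauge :
    Continuous fun q : Kn n × EucSp n => q.1.centroidGauge q.2 := by
  refine continuous_iff_continuousAt.2 fun q₀ => ?_
  obtain ⟨r, hr, hball⟩ := nhds_basis_closedBall.mem_iff.1 q₀.1.neg_centroid_vadd_mem_nhds
  exact tendsto_gauge_of_forall_subset_thickening (fun q => q.1.convex.vadd _)
    (fun q => q.1.isCompact.isClosed.vadd _) (q₀.1.convex.vadd _) hr hball
    (fun d hd => (eventually_neg_centroid_vadd_subset_thickening q₀.1 hd).prod_inl_nhds q₀.2)
    ((continuous_snd.sub (continuous_centroid.comp continuous_fst)).tendsto q₀)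

theorem _root_.Continuous.centroidGauge {X : Type*} [TopologicalSpace X] {f : X → Kn n}
    {g : X → EucSp n} (hf : Continuous f) (hg : Continuous g) :
    Continuous fun x => (f x).centroidGauge (g x) :=
  continuous_centroidGauge.comp₂ hf hg

end Kn

section AffineInvariantPoint

variable {n : ℕ}

theorem IsAffineInvariantPoint.lineMap {p p' : Kn n → EucSp n} (hp : IsAffineInvariantPoint p)
    (hp' : IsAffineInvariantPoint p') {φ : Kn n → ℝ} (hφ : Continuous φ)
    (hφT : ∀ T L, φ (affImage T L) = φ L) :
    IsAffineInvariantPoint fun L => AffineMap.lineMap (p L) (p' L) (φ L) :=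
  ⟨hp.1.lineMap hp'.1 hφ, fun T L => by simp only [hp.2, hp'.2, hφT, T.apply_lineMap]⟩

theorem isAffineInvariantPoint_centroid :
    IsAffineInvariantPoint fun L : Kn n => centroid L.toSet :=
  ⟨Kn.continuous_centroid, Kn.centroid_affImage⟩

theorem IsAffineInvariantPoint.mem_interior_of_ball_inter_PnSet_subset {p : Kn n → EucSp n}
    (hp : IsAffineInvariantPoint p) {K : Kn n} {ε : ℝ} (hε : 0 < ε)
    (hK : ball (p K) ε ∩ PnSet n K ⊆ K.toSet) : p K ∈ interior K.toSet := by
  set g := centroid K.toSet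
  set t := ε / (dist g (p K) + 1)
  have ht : 0 < t := by positivity
  have hy : AffineMap.lineMap g (p K) (1 + t) ∈ K.toSet := by
    refine hK ⟨?_, _, isAffineInvariantPoint_centroid.lineMap hp continuous_const
      (fun _ _ => rfl), rfl⟩
    rw [mem_ball, dist_lineMap_right, sub_add_cancel_left, norm_neg, Real.norm_of_nonneg ht.le,
      div_mul_eq_mul_div, div_lt_iff₀ (by positivity)]
    nlinarith [dist_nonneg (x := g) (y := p K)]
  have hpK : p K = AffineMap.lineMap g (AffineMap.lineMap g (p K) (1 + t)) (1 + t)⁻¹ := by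
    rw [AffineMap.lineMap_lineMap_right, inv_mul_cancel₀ (by positivity),
      AffineMap.lineMap_apply_one]
  rw [hpK]
  exact K.convex.openSegment_interior_closure_subset_interior K.centroid_mem_interior
    (subset_closure hy)
    (lineMap_mem_openSegment ℝ _ _ ⟨by positivity, inv_lt_one_of_one_lt₀ (by linarith)⟩)

theorem IsAffineInvariantPoint.exists_proper_of_mem_interior {p : Kn n → EucSp n}
    (hp : IsAffineInvariantPoint p) {K : Kn n} (hK : p K ∈ interior K.toSet) :
    ∃ q : Kn n → EucSp n, IsAffineInvariantPoint q ∧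
      (∀ L : Kn n, q L ∈ interior L.toSet) ∧ q K = p K := by
  obtain ⟨a, hKa, ha1⟩ := exists_between (K.centroidGauge_lt_one_iff.2 hK)
  have ha : 0 < a := (K.centroidGauge_nonneg _).trans_lt hKa
  have hmax : ∀ L : Kn n, 0 < max a (L.centroidGauge (p L)) := fun L => lt_max_of_lt_left ha
  refine ⟨fun L => AffineMap.lineMap (centroid L.toSet) (p L)
      (a / max a (L.centroidGauge (p L))),
    isAffineInvariantPoint_centroid.lineMap hp
      (continuous_const.div (continuous_const.max (continuous_id.centroidGauge hp.1))
        fun L => (hmax L).ne')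
      fun T L => by simp only [hp.2, Kn.centroidGauge_affImage], fun L => ?_, ?_⟩
  · rw [← Kn.centroidGauge_lt_one_iff,
      Kn.centroidGauge_lineMap _ _ (div_nonneg ha.le (hmax L).le), div_mul_eq_mul_div,
      div_lt_one (hmax L)]
    calc a * L.centroidGauge (p L) ≤ a * max a (L.centroidGauge (p L)) := by
          gcongr; exact le_max_right _ _
      _ < max a (L.centroidGauge (p L)) := mul_lt_of_lt_one_left (hmax L) ha1
  · simp only [max_eq_left hKa.le, div_self ha.ne', AffineMap.lineMap_apply_one]

end AffineInvariantPoint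

theorem statement17_general (n : ℕ) (K : Kn n) (x : EucSp n)
    (hxP : x ∈ PnSet n K)
    (hrel : ∃ ε : ℝ, 0 < ε ∧ ∀ y ∈ PnSet n K, dist y x < ε → y ∈ K.toSet) :
    ∃ q : Kn n → EucSp n, IsAffineInvariantPoint q ∧
      (∀ L : Kn n, q L ∈ interior L.toSet) ∧ q K = x := by
  obtain ⟨p, hp, rfl⟩ := hxP
  obtain ⟨ε, hε, hK⟩ := hrel
  exact hp.exists_proper_of_mem_interior
    (hp.mem_interior_of_ball_inter_PnSet_subset hε fun y hy => hK y hy.2 hy.1)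

/-- For `K ∈ 𝒦ₙ`, every point `x` of the interior of `K ∩ 𝔓ₙ(K)` relative to
the affine subspace `𝔓ₙ(K)` is of the form `x = q(K)` for some proper affine invariant
point `q`. -/
theorem statement17 (n : ℕ) (K : Kn n) (x : EucSp n)
    (hxK : x ∈ K.toSet) (hxP : x ∈ PnSet n K)
    (hrel : ∃ ε : ℝ, 0 < ε ∧ ∀ y ∈ PnSet n K, dist y x < ε → y ∈ K.toSet) :
    ∃ q : Kn n → EucSp n, IsAffineInvariantPoint q ∧
      (∀ L : Kn n, q L ∈ interior L.toSet) ∧ q K = x :=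
  statement17_general n K x hxP hrel
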